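/- Let p ∈ (0,1], let ε ∈ (0,1), and let f : X → Y be an ε-isometry between p-normed spaces. Then there exists a p-norm M on the product space X × Y such that M (x, 0) = N_X(x) for all x ∈ X, M (0, y) = N_Y(y) for all y ∈ Y, and M (−x, f x) ≤ ε * N_X(x) for all x ∈ X (i.e. the canonical inclusions i : X → X × Y and j : Y → X × Y are isometries and the linear map j ∘ f − i has operator quasinorm at most ε). -/

import Mathlib

/- Common framework: p-normed and p-Banach spaces, following the paper's definitions. -/

namespace PGurarii

/-- A `p`-norm on a real vector space: `N x = 0 ↔ x = 0`, absolute homogeneity, and the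
`p`-triangle inequality `N (x + y) ^ p ≤ N x ^ p + N y ^ p` (values in `ℝ₊`). -/
structure PNorm (p : ℝ) (X : Type) [AddCommGroup X] [Module ℝ X] where
  N : X → ℝ
  nonneg : ∀ x : X, 0 ≤ N x
  eq_zero_iff : ∀ x : X, N x = 0 ↔ x = 0
  smul_eq : ∀ (a : ℝ) (x : X), N (a • x) = |a| * N x
  add_pow_le : ∀ x y : X, N (x + y) ^ p ≤ N x ^ p + N y ^ p

/-- Completeness (sequential) for the induced metric `d(x,y) = N (x - y) ^ p`. -/
def IsCompleteP (p : ℝ) {X : Type} [AddCommGroup X] [Module ℝ X] (NX : PNorm p X) : Prop :=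
  ∀ u : ℕ → X,
    (∀ ε : ℝ, 0 < ε → ∃ n₀ : ℕ, ∀ m ≥ n₀, ∀ n ≥ n₀, NX.N (u m - u n) ^ p < ε) →
    ∃ x : X, ∀ ε : ℝ, 0 < ε → ∃ n₀ : ℕ, ∀ n ≥ n₀, NX.N (u n - x) ^ p < ε

/-- Separability for the induced metric topology. -/
def IsSeparableP (p : ℝ) {X : Type} [AddCommGroup X] [Module ℝ X] (NX : PNorm p X) : Prop :=
  ∃ D : Set X, D.Countable ∧ ∀ x : X, ∀ ε : ℝ, 0 < ε → ∃ y ∈ D, NX.N (x - y) ^ p < ε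

/-- A subspace is closed for the induced metric topology. -/
def IsClosedSubP (p : ℝ) {X : Type} [AddCommGroup X] [Module ℝ X] (NX : PNorm p X)
    (S : Submodule ℝ X) : Prop :=
  ∀ x : X, (∀ ε : ℝ, 0 < ε → ∃ y ∈ S, NX.N (x - y) ^ p < ε) → x ∈ S

/-- The restriction of a `p`-norm to a subspace. -/
def PNorm.restrict {p : ℝ} {X : Type} [AddCommGroup X] [Module ℝ X]
    (NX : PNorm p X) (S : Submodule ℝ X) : PNorm p S where
  N x := NX.N x
  nonneg x := NX.nonneg x
  eq_zero_iff x := by rw [NX.eq_zero_iff]; exact ZeroMemClass.coe_eq_zero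
  smul_eq a x := NX.smul_eq a x
  add_pow_le x y := NX.add_pow_le x y

/-- A `p`-Banach space: a real vector space with a `p`-norm, complete for the induced metric. -/
structure PBanach (p : ℝ) where
  carrier : Type
  [addCommGroup : AddCommGroup carrier]
  [module : Module ℝ carrier]
  pnorm : PNorm p carrier
  complete : IsCompleteP p pnorm

attribute [instance] PBanach.addCommGroup PBanach.module

/-- `U` is of almost universal disposition for finite-dimensional `p`-Banach spaces: for every
`ε > 0`, every isometry from a subspace `X` of `U` (with the restricted `p`-norm) into a
finite-dimensional `p`-Banach space `Y` extends, after an `ε`-isometry `Y → U`, the inclusion. -/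
def AUD (p : ℝ) (U : Type) [AddCommGroup U] [Module ℝ U] (NU : PNorm p U) : Prop :=
  ∀ ε : ℝ, 0 < ε → ∀ Y : PBanach p, FiniteDimensional ℝ Y.carrier →
    ∀ (Xs : Submodule ℝ U) (g : Xs →ₗ[ℝ] Y.carrier),
      (∀ x : Xs, Y.pnorm.N (g x) = NU.N (x : U)) →
      ∃ f : Y.carrier →ₗ[ℝ] U,
        (∀ y, (1 - ε) * Y.pnorm.N y ≤ NU.N (f y) ∧ NU.N (f y) ≤ (1 + ε) * Y.pnorm.N y) ∧
        ∀ x : Xs, f (g x) = (x : U)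

/-- `U` is of universal disposition for separable `p`-Banach spaces. -/
def UD (p : ℝ) (U : Type) [AddCommGroup U] [Module ℝ U] (NU : PNorm p U) : Prop :=
  ∀ Y : PBanach p, IsSeparableP p Y.pnorm →
    ∀ (Xs : Submodule ℝ U), IsClosedSubP p NU Xs →
      ∀ g : Xs →ₗ[ℝ] Y.carrier, (∀ x : Xs, Y.pnorm.N (g x) = NU.N (x : U)) →
        ∃ f : Y.carrier →ₗ[ℝ] U, (∀ y, NU.N (f y) = Y.pnorm.N y) ∧ ∀ x : Xs, f (g x) = (x : U)

end PGurarii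

/-!
The glued `p`-norm is `M = Q ^ p⁻¹` with
`Q (x, y) = ⨅ u, N_X (x + u) ^ p + ε ^ p * N_X u ^ p + N_Y (y - f u) ^ p` (`glueRpow`), the `p`-th
power of the quotient `p`-norm of `X ⊕ₚ X ⊕ₚ Y` (weight `ε` on the middle factor) modulo
`{(u, u, -f u)}`, restricted to the points `(x, 0, y)`. The cost is jointly `p`-subadditive and
`p`-homogeneous in `((x, y), u)`, hence so is its infimum `Q`. The choices `u = 0` and `u = x` give
`M (x, 0) ≤ N_X x`, `M (0, y) ≤ N_Y y` and `M (-x, f x) ≤ ε N_X x`. The reverse inequalities, and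
with them definiteness, come from the two halves of the `ε`-isometry hypothesis through
`1 ≤ ε ^ p + (1 - ε) ^ p` and `(1 + ε) ^ p ≤ 1 + ε ^ p`.
-/

namespace PGurarii

section RpowInequalities

variable {p ε a b : ℝ}

lemma rpow_le_rpow_mul_add_rpow (hp0 : 0 ≤ p) (hp1 : p ≤ 1) (hε0 : 0 ≤ ε) (hε1 : ε ≤ 1)
    (ha : 0 ≤ a) (h : (1 - ε) * a ≤ b) : a ^ p ≤ ε ^ p * a ^ p + b ^ p := by
  have hsplit : 1 ≤ ε ^ p + (1 - ε) ^ p := by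
    simpa using Real.rpow_add_le_add_rpow hε0 (sub_nonneg.2 hε1) hp0 hp1
  calc a ^ p ≤ (ε ^ p + (1 - ε) ^ p) * a ^ p :=
        le_mul_of_one_le_left (Real.rpow_nonneg ha p) hsplit
    _ = ε ^ p * a ^ p + ((1 - ε) * a) ^ p := by
        rw [Real.mul_rpow (sub_nonneg.2 hε1) ha]; ring
    _ ≤ ε ^ p * a ^ p + b ^ p := by gcongr

lemma rpow_le_one_add_rpow_mul_rpow (hp0 : 0 ≤ p) (hp1 : p ≤ 1) (hε0 : 0 ≤ ε) (ha : 0 ≤ a)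
    (hb : 0 ≤ b) (h : b ≤ (1 + ε) * a) : b ^ p ≤ (1 + ε ^ p) * a ^ p :=
  calc b ^ p ≤ ((1 + ε) * a) ^ p := Real.rpow_le_rpow hb h hp0
    _ = (1 + ε) ^ p * a ^ p := Real.mul_rpow (by positivity) ha
    _ ≤ (1 + ε ^ p) * a ^ p := by
        gcongr
        simpa using Real.rpow_add_le_add_rpow zero_le_one hε0 hp0 hp1

end RpowInequalities

namespace PNorm

variable {p : ℝ} {X : Type} [AddCommGroup X] [Module ℝ X]

section Basic

variable (ν : PNorm p X)

lemma map_zero : ν.N 0 = 0 := (ν.eq_zero_iff 0).2 rfl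

lemma map_neg (x : X) : ν.N (-x) = ν.N x := by simpa using ν.smul_eq (-1) x

lemma rpow_nonneg (x : X) : 0 ≤ ν.N x ^ p := Real.rpow_nonneg (ν.nonneg x) p

lemma rpow_le_rpow_sub_add_rpow (x y : X) : ν.N x ^ p ≤ ν.N (x - y) ^ p + ν.N y ^ p := by
  simpa using ν.add_pow_le (x - y) y

lemma eq_zero_of_rpow_nonpos (hp : p ≠ 0) {x : X} (h : ν.N x ^ p ≤ 0) : x = 0 :=
  (ν.eq_zero_iff x).1 <|
    (Real.rpow_eq_zero (ν.nonneg x) hp).1 (le_antisymm h (ν.rpow_nonneg x))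

end Basic

section OfRpow

variable (hp : 0 < p) (Q : X → ℝ) (nonneg : ∀ x, 0 ≤ Q x) (eq_zero : ∀ x, Q x = 0 → x = 0)
  (smul : ∀ (a : ℝ) (x : X), Q (a • x) = |a| ^ p * Q x) (add_le : ∀ x y, Q (x + y) ≤ Q x + Q y)

noncomputable def ofRpow : PNorm p X where
  N x := Q x ^ p⁻¹
  nonneg x := Real.rpow_nonneg (nonneg x) _
  eq_zero_iff x := by
    rw [Real.rpow_eq_zero (nonneg x) (inv_ne_zero hp.ne')]
    refine ⟨eq_zero x, ?_⟩
    rintro rfl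
    simpa [Real.zero_rpow hp.ne'] using smul 0 0
  smul_eq a x := by
    rw [smul, Real.mul_rpow (by positivity) (nonneg x), Real.rpow_rpow_inv (abs_nonneg a) hp.ne']
  add_pow_le x y := by
    simp only [Real.rpow_inv_rpow (nonneg _) hp.ne']
    exact add_le x y

variable {hp Q nonneg eq_zero smul add_le}

lemma ofRpow_N_eq {x : X} {r : ℝ} (hr : 0 ≤ r) (h : Q x = r ^ p) :
    (ofRpow hp Q nonneg eq_zero smul add_le).N x = r := by
  change Q x ^ p⁻¹ = r
  rw [h, Real.rpow_rpow_inv hr hp.ne']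

lemma ofRpow_N_le {x : X} {r : ℝ} (hr : 0 ≤ r) (h : Q x ≤ r ^ p) :
    (ofRpow hp Q nonneg eq_zero smul add_le).N x ≤ r :=
  calc Q x ^ p⁻¹ ≤ (r ^ p) ^ p⁻¹ := Real.rpow_le_rpow (nonneg x) h (inv_nonneg.2 hp.le)
    _ = r := Real.rpow_rpow_inv hr hp.ne'

end OfRpow

end PNorm

section Glue

variable {p : ℝ} {X Y : Type} [AddCommGroup X] [Module ℝ X] [AddCommGroup Y] [Module ℝ Y]
  (NX : PNorm p X) (NY : PNorm p Y) (ε : ℝ) (f : X →ₗ[ℝ] Y)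

noncomputable def glueCost (z : X × Y) (u : X) : ℝ :=
  NX.N (z.1 + u) ^ p + ε ^ p * NX.N u ^ p + NY.N (z.2 - f u) ^ p

noncomputable def glueRpow (z : X × Y) : ℝ := ⨅ u, glueCost NX NY ε f z u

variable {NX NY ε f}

lemma glueCost_nonneg (hε : 0 ≤ ε) (z : X × Y) (u : X) : 0 ≤ glueCost NX NY ε f z u :=
  add_nonneg (add_nonneg (NX.rpow_nonneg _) (mul_nonneg (Real.rpow_nonneg hε p) (NX.rpow_nonneg _)))
    (NY.rpow_nonneg _)

lemma glueCost_zero_right (hp : p ≠ 0) (x : X) (y : Y) :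
    glueCost NX NY ε f (x, y) 0 = NX.N x ^ p + NY.N y ^ p := by
  simp [glueCost, NX.map_zero, Real.zero_rpow hp]

lemma glueCost_smul (a : ℝ) (z : X × Y) (u : X) :
    glueCost NX NY ε f (a • z) (a • u) = |a| ^ p * glueCost NX NY ε f z u := by
  have hX : (a • z).1 + a • u = a • (z.1 + u) := by rw [Prod.smul_fst, smul_add]
  have hY : (a • z).2 - f (a • u) = a • (z.2 - f u) := by rw [Prod.smul_snd, map_smul, smul_sub]
  simp only [glueCost, hX, hY, NX.smul_eq, NY.smul_eq, Real.mul_rpow (abs_nonneg a) (NX.nonneg _),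
    Real.mul_rpow (abs_nonneg a) (NY.nonneg _)]
  ring

lemma glueCost_add_le (hε : 0 ≤ ε) (z w : X × Y) (u v : X) :
    glueCost NX NY ε f (z + w) (u + v) ≤ glueCost NX NY ε f z u + glueCost NX NY ε f w v := by
  have hX : NX.N ((z + w).1 + (u + v)) ^ p ≤ NX.N (z.1 + u) ^ p + NX.N (w.1 + v) ^ p := by
    rw [show (z + w).1 + (u + v) = (z.1 + u) + (w.1 + v) by rw [Prod.fst_add]; abel]
    exact NX.add_pow_le _ _
  have hY : NY.N ((z + w).2 - f (u + v)) ^ p ≤ NY.N (z.2 - f u) ^ p + NY.N (w.2 - f v) ^ p := by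
    rw [show (z + w).2 - f (u + v) = (z.2 - f u) + (w.2 - f v) by
      rw [Prod.snd_add, map_add]; abel]
    exact NY.add_pow_le _ _
  have hU : ε ^ p * NX.N (u + v) ^ p ≤ ε ^ p * NX.N u ^ p + ε ^ p * NX.N v ^ p := by
    rw [← mul_add]
    exact mul_le_mul_of_nonneg_left (NX.add_pow_le u v) (Real.rpow_nonneg hε p)
  simp only [glueCost]
  linarith

lemma glueRpow_nonneg (hε : 0 ≤ ε) (z : X × Y) : 0 ≤ glueRpow NX NY ε f z :=
  le_ciInf (glueCost_nonneg hε z)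

lemma glueRpow_le_glueCost (hε : 0 ≤ ε) (z : X × Y) (u : X) :
    glueRpow NX NY ε f z ≤ glueCost NX NY ε f z u :=
  ciInf_le ⟨0, by rintro _ ⟨v, rfl⟩; exact glueCost_nonneg hε z v⟩ u

lemma glueRpow_inl_le (hp : p ≠ 0) (hε : 0 ≤ ε) (x : X) :
    glueRpow NX NY ε f (x, 0) ≤ NX.N x ^ p :=
  (glueRpow_le_glueCost hε (x, 0) 0).trans_eq <| by
    simp [glueCost_zero_right hp, NY.map_zero, Real.zero_rpow hp]

lemma glueRpow_inr_le (hp : p ≠ 0) (hε : 0 ≤ ε) (y : Y) :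
    glueRpow NX NY ε f (0, y) ≤ NY.N y ^ p :=
  (glueRpow_le_glueCost hε (0, y) 0).trans_eq <| by
    simp [glueCost_zero_right hp, NX.map_zero, Real.zero_rpow hp]

lemma glueRpow_zero (hp : p ≠ 0) (hε : 0 ≤ ε) : glueRpow NX NY ε f 0 = 0 :=
  le_antisymm
    ((glueRpow_le_glueCost hε 0 0).trans_eq <| by
      simp [glueCost, NX.map_zero, NY.map_zero, Real.zero_rpow hp])
    (glueRpow_nonneg hε 0)

lemma glueRpow_smul (hp : p ≠ 0) (hε : 0 ≤ ε) (a : ℝ) (z : X × Y) :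
    glueRpow NX NY ε f (a • z) = |a| ^ p * glueRpow NX NY ε f z := by
  rcases eq_or_ne a 0 with rfl | ha
  · simp [glueRpow_zero hp hε, Real.zero_rpow hp]
  have hsurj : Function.Surjective (a • · : X → X) := fun u => ⟨a⁻¹ • u, smul_inv_smul₀ ha u⟩
  calc glueRpow NX NY ε f (a • z) = ⨅ u, glueCost NX NY ε f (a • z) (a • u) :=
        (hsurj.iInf_comp _).symm
    _ = ⨅ u, |a| ^ p * glueCost NX NY ε f z u := by simp only [glueCost_smul]
    _ = |a| ^ p * glueRpow NX NY ε f z := (Real.mul_iInf_of_nonneg (by positivity) _).symm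

lemma glueRpow_add_le (hε : 0 ≤ ε) (z w : X × Y) :
    glueRpow NX NY ε f (z + w) ≤ glueRpow NX NY ε f z + glueRpow NX NY ε f w :=
  le_ciInf_add_ciInf fun u v => (glueRpow_le_glueCost hε _ _).trans (glueCost_add_le hε z w u v)

lemma glueRpow_neg_map_le (hp : p ≠ 0) (hε : 0 ≤ ε) (x : X) :
    glueRpow NX NY ε f (-x, f x) ≤ (ε * NX.N x) ^ p :=
  calc glueRpow NX NY ε f (-x, f x) ≤ glueCost NX NY ε f (-x, f x) x :=
        glueRpow_le_glueCost hε _ x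
    _ = (ε * NX.N x) ^ p := by
        simp [glueCost, NX.map_zero, NY.map_zero, Real.zero_rpow hp, Real.mul_rpow hε (NX.nonneg x)]

lemma rpow_mul_rpow_fst_le_glueRpow (hp : 0 ≤ p) (hε0 : 0 ≤ ε) (hε1 : ε ≤ 1) (z : X × Y) :
    ε ^ p * NX.N z.1 ^ p ≤ glueRpow NX NY ε f z :=
  le_ciInf fun u => by
    have htri := NX.rpow_le_rpow_sub_add_rpow z.1 (-u)
    rw [sub_neg_eq_add, NX.map_neg] at htri
    have hεp : ε ^ p ≤ 1 := Real.rpow_le_one hε0 hε1 hp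
    simp only [glueCost]
    nlinarith [NX.rpow_nonneg (z.1 + u), NX.rpow_nonneg u, NY.rpow_nonneg (z.2 - f u),
      Real.rpow_nonneg hε0 p]

lemma rpow_le_glueRpow_inl (hp0 : 0 ≤ p) (hp1 : p ≤ 1) (hε0 : 0 ≤ ε) (hε1 : ε ≤ 1)
    (hf : ∀ u, (1 - ε) * NX.N u ≤ NY.N (f u)) (x : X) :
    NX.N x ^ p ≤ glueRpow NX NY ε f (x, 0) :=
  le_ciInf fun u => by
    have htri := NX.rpow_le_rpow_sub_add_rpow x (-u)
    rw [sub_neg_eq_add, NX.map_neg] at htri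
    have hfu := rpow_le_rpow_mul_add_rpow hp0 hp1 hε0 hε1 (NX.nonneg u) (hf u)
    simp only [glueCost, zero_sub, NY.map_neg]
    linarith

lemma rpow_le_glueRpow_inr (hp0 : 0 ≤ p) (hp1 : p ≤ 1) (hε : 0 ≤ ε)
    (hf : ∀ u, NY.N (f u) ≤ (1 + ε) * NX.N u) (y : Y) :
    NY.N y ^ p ≤ glueRpow NX NY ε f (0, y) :=
  le_ciInf fun u => by
    have htri := NY.rpow_le_rpow_sub_add_rpow y (f u)
    have hfu := rpow_le_one_add_rpow_mul_rpow hp0 hp1 hε (NX.nonneg u) (NY.nonneg _) (hf u)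
    simp only [glueCost, zero_add]
    linarith

lemma eq_zero_of_glueRpow_eq_zero (hp0 : 0 < p) (hp1 : p ≤ 1) (hε0 : 0 < ε) (hε1 : ε ≤ 1)
    (hf : ∀ u, NY.N (f u) ≤ (1 + ε) * NX.N u) {z : X × Y} (hz : glueRpow NX NY ε f z = 0) :
    z = 0 := by
  obtain ⟨x, y⟩ := z
  have hx : x = 0 := by
    have h : ε ^ p * NX.N x ^ p ≤ glueRpow NX NY ε f (x, y) :=
      rpow_mul_rpow_fst_le_glueRpow hp0.le hε0.le hε1 (x, y)
    rw [hz] at h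
    exact NX.eq_zero_of_rpow_nonpos hp0.ne'
      (nonpos_of_mul_nonpos_right h (Real.rpow_pos_of_pos hε0 p))
  subst hx
  have hy := rpow_le_glueRpow_inr hp0.le hp1 hε0.le hf y
  rw [hz] at hy
  rw [NY.eq_zero_of_rpow_nonpos hp0.ne' hy]
  rfl

end Glue

theorem statement6 (p : ℝ) (hp0 : 0 < p) (hp1 : p ≤ 1)
    (X Y : Type) [AddCommGroup X] [Module ℝ X] [AddCommGroup Y] [Module ℝ Y]
    (NX : PNorm p X) (NY : PNorm p Y)
    (ε : ℝ) (hε0 : 0 < ε) (hε1 : ε < 1)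
    (f : X →ₗ[ℝ] Y)
    (hf : ∀ x : X, (1 - ε) * NX.N x ≤ NY.N (f x) ∧ NY.N (f x) ≤ (1 + ε) * NX.N x) :
    ∃ M : PNorm p (X × Y),
      (∀ x : X, M.N (x, 0) = NX.N x) ∧
      (∀ y : Y, M.N (0, y) = NY.N y) ∧
      ∀ x : X, M.N (-x, f x) ≤ ε * NX.N x := by
  have hp : p ≠ 0 := hp0.ne'
  have hf_upper : ∀ u, NY.N (f u) ≤ (1 + ε) * NX.N u := fun u => (hf u).2
  refine ⟨PNorm.ofRpow hp0 (glueRpow NX NY ε f) (glueRpow_nonneg hε0.le)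
      (fun _ => eq_zero_of_glueRpow_eq_zero hp0 hp1 hε0 hε1.le hf_upper)
      (glueRpow_smul hp hε0.le) (glueRpow_add_le hε0.le), fun x => ?_, fun y => ?_, fun x => ?_⟩
  · refine PNorm.ofRpow_N_eq (NX.nonneg x) (le_antisymm (glueRpow_inl_le hp hε0.le x) ?_)
    exact rpow_le_glueRpow_inl hp0.le hp1 hε0.le hε1.le (fun u => (hf u).1) x
  · refine PNorm.ofRpow_N_eq (NY.nonneg y) (le_antisymm (glueRpow_inr_le hp hε0.le y) ?_)
    exact rpow_le_glueRpow_inr hp0.le hp1 hε0.le hf_upper y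
  · exact PNorm.ofRpow_N_le (mul_nonneg hε0.le (NX.nonneg x)) (glueRpow_neg_map_le hp hε0.le x)

end PGurarii
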